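/- Let A : ℕ → ℕ be defined by A(0) = 1, A(1) = 2, and A(n) = 1 + C(A(n−2)+1, 2) + A(n−2)·(A(n−1) − A(n−2)) for n ≥ 2, and for n ≥ 2 let E(n) = log(1 + 1/(2·A(n−1)) − A(n−2)/(2·A(n−1)) + 1/(A(n−1)·A(n−2))). Let ψ = (1−√5)/2. Then the sequence n ↦ ∑_{i=2}^{n} E(i)·ψ^{n−i+1} converges to a finite limit as n → ∞. -/

import Mathlib

open Filter

def A : ℕ → ℕ
  | 0 => 1
  | 1 => 2
  | n + 2 => 1 + Nat.choose (A n + 1) 2 + A n * (A (n + 1) - A n)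

noncomputable def E (n : ℕ) : ℝ :=
  Real.log (1 + 1 / (2 * (A (n - 1) : ℝ)) - (A (n - 2) : ℝ) / (2 * (A (n - 1) : ℝ))
    + 1 / ((A (n - 1) : ℝ) * (A (n - 2) : ℝ)))

noncomputable def ψ : ℝ := (1 - Real.sqrt 5) / 2

/-!
The recursion reads `2 A(n+2) = 2 + A n (2 A(n+1) - A n + 1)`, and `A` is increasing, so
`A n * A (n + 1) ≤ 2 * A (n + 2)`; hence `A` at least doubles from some point on, so `1 / A n`
and `A n / A (n + 1)` are summable. Then `E (n + 2) = log (1 + x n)` with `x n` summable, so `E`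
is absolutely summable. The sum in the theorem is the `n`-th coefficient of the Cauchy product
of `E` (restricted to `i ≥ 2`) with the geometric series `k ↦ ψ ^ (k + 1)`, which is absolutely
summable because `|ψ| < 1`; the coefficients of an absolutely summable series tend to `0`.
-/

open Finset Topology

theorem tendsto_sum_Icc_mul_pow_of_summable_norm {R : Type*} [NormedRing R] [CompleteSpace R]
    {f : ℕ → R} (hf : Summable (‖f ·‖)) {q : R} (hq : ‖q‖ < 1) (m : ℕ) :
    Tendsto (fun n => ∑ i ∈ Icc m n, f i * q ^ (n - i + 1)) atTop (𝓝 0) := by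
  set g : ℕ → R := fun i => if m ≤ i then f i else 0
  have hg : Summable (‖g ·‖) :=
    hf.of_nonneg_of_le (fun _ => norm_nonneg _) fun i => by
      by_cases hi : m ≤ i <;> simp [g, hi]
  have hpow : Summable fun k => ‖q ^ (k + 1)‖ :=
    ((summable_nat_add_iff 1).mpr (summable_geometric_of_lt_one (norm_nonneg q) hq)).of_nonneg_of_le
      (fun _ => norm_nonneg _) fun k => norm_pow_le' q k.succ_pos
  refine (summable_norm_sum_mul_range_of_summable_norm hg hpow).of_norm.tendsto_atTop_zero.congr
    fun n => ?_
  have hfilter : (range (n + 1)).filter (m ≤ ·) = Icc m n := by ext; simp; omega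
  simp only [g, ite_mul, zero_mul]
  rw [← sum_filter, hfilter]

theorem two_mul_choose_two_succ (k : ℕ) : 2 * (k + 1).choose 2 = (k + 1) * k := by
  simpa [mul_comm] using (Nat.add_one_mul_choose_eq k 1).symm

theorem one_le_A : ∀ n, 1 ≤ A n
  | 0 | 1 => by decide
  | n + 2 => by rw [A]; omega

theorem A_lt_A_succ (n : ℕ) : A n < A (n + 1) := by
  induction n with
  | zero => decide
  | succ n ih =>
    have hmul : A (n + 1) - A n ≤ A n * (A (n + 1) - A n) :=
      Nat.le_mul_of_pos_left _ (one_le_A n)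
    have hchoose : A n ≤ (A n + 1).choose 2 := by
      nlinarith [two_mul_choose_two_succ (A n), one_le_A n]
    show A (n + 1) < A (n + 2)
    rw [A]
    omega

theorem strictMono_A : StrictMono A := strictMono_nat_of_lt_succ A_lt_A_succ

theorem A_mul_A_succ_le (n : ℕ) : A n * A (n + 1) ≤ 2 * A (n + 2) := by
  obtain ⟨d, hd⟩ := Nat.exists_eq_add_of_le (A_lt_A_succ n).le
  have hchoose := two_mul_choose_two_succ (A n)
  rw [A, hd, Nat.add_sub_cancel_left]
  nlinarith

theorem two_mul_A_le_A_succ {n : ℕ} (hn : 5 ≤ n) : 2 * A n ≤ A (n + 1) := by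
  obtain ⟨k, rfl⟩ := Nat.exists_eq_add_of_le' hn
  have h4 : 4 ≤ A (k + 4) := (show 4 ≤ k + 4 by omega).trans strictMono_A.le_apply
  nlinarith [A_mul_A_succ_le (k + 4)]

theorem cast_A_pos (n : ℕ) : (0 : ℝ) < A n := by exact_mod_cast one_le_A n

theorem summable_inv_A : Summable fun n => (A n : ℝ)⁻¹ := by
  refine summable_of_ratio_norm_eventually_le (r := 1 / 2) (by norm_num) ?_
  filter_upwards [eventually_ge_atTop 5] with n hn
  have h : (2 * A n : ℝ) ≤ A (n + 1) := by exact_mod_cast two_mul_A_le_A_succ hn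
  have := cast_A_pos n
  rw [norm_inv, norm_inv, Real.norm_natCast, Real.norm_natCast,
    inv_le_iff_one_le_mul₀ (cast_A_pos _)]
  field_simp
  linarith

theorem summable_A_div_A_succ : Summable fun n => (A n : ℝ) / A (n + 1) := by
  rw [← summable_nat_add_iff 1]
  refine (summable_inv_A.mul_left 2).of_nonneg_of_le (fun n => by positivity) fun n => ?_
  have h : (A n * A (n + 1) : ℝ) ≤ 2 * A (n + 2) := by exact_mod_cast A_mul_A_succ_le n
  have := cast_A_pos n
  rw [div_le_iff₀ (cast_A_pos _)]
  field_simp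
  linarith

theorem E_add_two (n : ℕ) :
    E (n + 2) = Real.log (1 + 1 / (2 * (A (n + 1) : ℝ)) - (A n : ℝ) / (2 * (A (n + 1) : ℝ))
      + 1 / ((A (n + 1) : ℝ) * (A n : ℝ))) := rfl

theorem summable_E : Summable E := by
  rw [← summable_nat_add_iff 2]
  have hinv : Summable fun n => (A (n + 1) : ℝ)⁻¹ := (summable_nat_add_iff 1).mpr summable_inv_A
  have h₁ : Summable fun n => 1 / (2 * (A (n + 1) : ℝ)) :=
    (hinv.div_const 2).congr fun n => by field_simp
  have h₂ : Summable fun n => (A n : ℝ) / (2 * (A (n + 1) : ℝ)) :=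
    (summable_A_div_A_succ.div_const 2).congr fun n => by field_simp
  have h₃ : Summable fun n => 1 / ((A (n + 1) : ℝ) * (A n : ℝ)) :=
    hinv.of_nonneg_of_le (fun n => by have := cast_A_pos n; have := cast_A_pos (n + 1); positivity)
      fun n => by
        rw [one_div, mul_inv]
        exact mul_le_of_le_one_right (inv_nonneg.mpr (cast_A_pos _).le)
          (inv_le_one_of_one_le₀ (by exact_mod_cast one_le_A n))
  refine (Real.summable_log_one_add_of_summable ((h₁.sub h₂).add h₃)).congr fun n => ?_
  rw [E_add_two]
  ring_nf

theorem abs_ψ_lt_one : |ψ| < 1 := by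
  have h5 : Real.sqrt 5 < 3 := by
    rw [Real.sqrt_lt' (by norm_num)]; norm_num
  rw [ψ, abs_lt]
  constructor <;> linarith [Real.sqrt_nonneg 5]

theorem stmt_9 :
    ∃ L : ℝ, Tendsto (fun n : ℕ => ∑ i ∈ Finset.Icc 2 n, E i * ψ ^ (n - i + 1))
      atTop (nhds L) := by
  have hE : Summable (‖E ·‖) := summable_norm_iff.mpr summable_E
  have hψ : ‖ψ‖ < 1 := by rw [Real.norm_eq_abs]; exact abs_ψ_lt_one
  exact ⟨0, tendsto_sum_Icc_mul_pow_of_summable_norm hE hψ 2⟩
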